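/- arXiv:1510.00521 — 2 statements merged into one kernel-verified Lean document; each statement's English description precedes it below -/
import Mathlib

section
/- Let A, B, C, F : ℝ → ℝ be smooth with F' ≠ 0 and A'(u)·s + B'(u) ≠ 0 on the domain considered. Define κ₁(s,u) = -A(u)²·C'(u)·cos(C(u))/(A'(u)s + B'(u)), ω₁(s,u) = A(u)·C'(u)·cos(C(u))/(F'(A(u)s+B(u))·(A'(u)s+B'(u))), with t = F(A(u)s + B(u)) implicitly defining u as a function of (s,t). Then at every point, ∂_t κ₁ = ∂_s ω₁, where the partial derivatives are computed holding s (resp. t) fixed using the chain rule through u. -/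
open Real

/-- With `κ₁` and `ω₁` given by the parametrized formulas and
`t = F(A(u)s + B(u))` implicitly defining `u = u(s,t)`, the compatibility
equation `∂_t κ₁ = ∂_s ω₁` holds at every point (partial derivatives taken in
the `(s,t)` coordinates, through the implicit function `u`). -/
theorem stmt_5 (A B C F : ℝ → ℝ) (u : ℝ → ℝ → ℝ)
    (hA : ContDiff ℝ (⊤ : ℕ∞) A) (hB : ContDiff ℝ (⊤ : ℕ∞) B) (hC : ContDiff ℝ (⊤ : ℕ∞) C)
    (hF : ContDiff ℝ (⊤ : ℕ∞) F)
    (hu : ContDiff ℝ (⊤ : ℕ∞) (fun p : ℝ × ℝ => u p.1 p.2))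
    (himp : ∀ s t : ℝ, F (A (u s t) * s + B (u s t)) = t)
    (hF' : ∀ s t : ℝ, deriv F (A (u s t) * s + B (u s t)) ≠ 0)
    (hden : ∀ s t : ℝ, deriv A (u s t) * s + deriv B (u s t) ≠ 0) :
    ∀ s t : ℝ,
      deriv (fun τ =>
        -((A (u s τ)) ^ 2 * deriv C (u s τ) * Real.cos (C (u s τ))) /
          (deriv A (u s τ) * s + deriv B (u s τ))) t
      = deriv (fun σ =>
        A (u σ t) * deriv C (u σ t) * Real.cos (C (u σ t)) /
          (deriv F (A (u σ t) * σ + B (u σ t)) *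
            (deriv A (u σ t) * σ + deriv B (u σ t)))) s := by
  intro s t
  have hC' : ContDiff ℝ 1 (deriv C) :=
    (contDiff_succ_iff_deriv.1 (hC.of_le (WithTop.coe_le_coe.2 le_top) : ContDiff ℝ (1 + 1) C)).2.2
  set g : ℝ → ℝ := fun x => A x * deriv C x * Real.cos (C x) with hgdef
  have hgC : ContDiff ℝ 1 g :=
    ((hA.of_le (by simp) : ContDiff ℝ 1 A).mul hC').mul
      (Real.contDiff_cos.of_le le_rfl |>.comp (hC.of_le (by simp) : ContDiff ℝ 1 C))
  set G : ℝ → ℝ := fun x => ∫ y in (0:ℝ)..x, g y with hGdef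
  have hGd : ∀ x, HasDerivAt G (g x) x := fun x =>
    (hgC.continuous.integral_hasStrictDerivAt 0 x).hasDerivAt
  have hGC : ContDiff ℝ (1 + 1) G := by
    rw [contDiff_succ_iff_deriv]
    refine ⟨fun x => (hGd x).differentiableAt, by simp, ?_⟩
    have hd : deriv G = g := funext fun x => (hGd x).deriv
    rw [hd]; exact hgC
  set H : ℝ × ℝ → ℝ := fun p => G (u p.1 p.2) with hHdef
  have hH : ContDiff ℝ (1 + 1) H := hGC.comp (hu.of_le (WithTop.coe_le_coe.2 le_top))
  have hudiff : Differentiable ℝ (fun p : ℝ × ℝ => u p.1 p.2) := hu.differentiable (by simp)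
  have hline1 : ∀ σ τ : ℝ, HasDerivAt (fun x : ℝ => (x, τ)) ((1:ℝ), (0:ℝ)) σ :=
    fun σ τ => (hasDerivAt_id σ).prodMk (hasDerivAt_const σ τ)
  have hline2 : ∀ σ τ : ℝ, HasDerivAt (fun x : ℝ => (σ, x)) ((0:ℝ), (1:ℝ)) τ :=
    fun σ τ => (hasDerivAt_const τ σ).prodMk (hasDerivAt_id τ)
  set u1 : ℝ → ℝ → ℝ :=
    fun σ τ => fderiv ℝ (fun p : ℝ × ℝ => u p.1 p.2) (σ, τ) (1, 0) with hu1def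
  set u2 : ℝ → ℝ → ℝ :=
    fun σ τ => fderiv ℝ (fun p : ℝ × ℝ => u p.1 p.2) (σ, τ) (0, 1) with hu2def
  have hud1 : ∀ σ τ, HasDerivAt (fun x => u x τ) (u1 σ τ) σ := fun σ τ =>
    by have := (hudiff (σ, τ)).hasFDerivAt.comp_hasDerivAt σ (hline1 σ τ); exact this
  have hud2 : ∀ σ τ, HasDerivAt (fun x => u σ x) (u2 σ τ) τ := fun σ τ =>
    (hudiff (σ, τ)).hasFDerivAt.comp_hasDerivAt τ (hline2 σ τ)
  have hAd : ∀ x, HasDerivAt A (deriv A x) x := fun x =>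
    (hA.differentiable (by simp) x).hasDerivAt
  have hBd : ∀ x, HasDerivAt B (deriv B x) x := fun x =>
    (hB.differentiable (by simp) x).hasDerivAt
  have hFd : ∀ x, HasDerivAt F (deriv F x) x := fun x =>
    (hF.differentiable (by simp) x).hasDerivAt
  -- implicit differentiation in σ
  have key1 : ∀ σ τ, u1 σ τ * (deriv A (u σ τ) * σ + deriv B (u σ τ)) + A (u σ τ) = 0 := by
    intro σ τ
    have hw : HasDerivAt (fun x => A (u x τ) * x + B (u x τ))
        ((deriv A (u σ τ) * u1 σ τ) * σ + A (u σ τ) * 1 + deriv B (u σ τ) * u1 σ τ) σ :=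
      (((hAd _).comp σ (hud1 σ τ)).mul (hasDerivAt_id σ)).add ((hBd _).comp σ (hud1 σ τ))
    have hFw : HasDerivAt (fun x => F (A (u x τ) * x + B (u x τ)))
        (deriv F (A (u σ τ) * σ + B (u σ τ)) *
          ((deriv A (u σ τ) * u1 σ τ) * σ + A (u σ τ) * 1 + deriv B (u σ τ) * u1 σ τ)) σ :=
      (hFd _).comp σ hw
    have heq : (fun x => F (A (u x τ) * x + B (u x τ))) = fun _ => τ :=
      funext fun x => himp x τ
    rw [heq] at hFw
    have h0 := (hasDerivAt_const σ τ).unique hFw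
    have hE : (deriv A (u σ τ) * u1 σ τ) * σ + A (u σ τ) * 1 + deriv B (u σ τ) * u1 σ τ = 0 :=
      (mul_eq_zero.1 h0.symm).resolve_left (hF' σ τ)
    linear_combination hE
  -- implicit differentiation in τ
  have key2 : ∀ σ τ,
      deriv F (A (u σ τ) * σ + B (u σ τ)) *
        (u2 σ τ * (deriv A (u σ τ) * σ + deriv B (u σ τ))) = 1 := by
    intro σ τ
    have hw : HasDerivAt (fun x => A (u σ x) * σ + B (u σ x))
        ((deriv A (u σ τ) * u2 σ τ) * σ + deriv B (u σ τ) * u2 σ τ) τ := by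
      have h1 : HasDerivAt (fun x => A (u σ x) * σ)
          ((deriv A (u σ τ) * u2 σ τ) * σ) τ :=
        ((hAd _).comp τ (hud2 σ τ)).mul_const σ
      exact h1.add ((hBd _).comp τ (hud2 σ τ))
    have hFw : HasDerivAt (fun x => F (A (u σ x) * σ + B (u σ x)))
        (deriv F (A (u σ τ) * σ + B (u σ τ)) *
          ((deriv A (u σ τ) * u2 σ τ) * σ + deriv B (u σ τ) * u2 σ τ)) τ :=
      (hFd _).comp τ hw
    have heq : (fun x => F (A (u σ x) * σ + B (u σ x))) = fun x => x :=
      funext fun x => himp σ x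
    rw [heq] at hFw
    have h0 := (hasDerivAt_id τ).unique hFw
    linear_combination -h0
  -- κ₁ as a partial derivative of H
  have hκ : ∀ τ, -((A (u s τ)) ^ 2 * deriv C (u s τ) * Real.cos (C (u s τ))) /
      (deriv A (u s τ) * s + deriv B (u s τ)) = fderiv ℝ H (s, τ) (1, 0) := by
    intro τ
    have hGc : HasDerivAt (fun x => G (u x τ)) (g (u s τ) * u1 s τ) s :=
      (hGd _).comp s (hud1 s τ)
    have hGc' : HasDerivAt (fun x => H (x, τ)) (fderiv ℝ H (s, τ) (1, 0)) s :=
      by have := ((hH.differentiable (by norm_num)) (s, τ)).hasFDerivAt.comp_hasDerivAt s (hline1 s τ); exact this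
    have heq : g (u s τ) * u1 s τ = fderiv ℝ H (s, τ) (1, 0) := hGc.unique hGc'
    rw [← heq, hgdef]
    have h1 := key1 s τ
    have hD := hden s τ
    field_simp
    linear_combination (-(A (u s τ) * deriv C (u s τ) * Real.cos (C (u s τ)))) * h1
  -- ω₁ as a partial derivative of H
  have hω : ∀ σ, A (u σ t) * deriv C (u σ t) * Real.cos (C (u σ t)) /
      (deriv F (A (u σ t) * σ + B (u σ t)) *
        (deriv A (u σ t) * σ + deriv B (u σ t))) = fderiv ℝ H (σ, t) (0, 1) := by
    intro σ
    have hGc : HasDerivAt (fun x => G (u σ x)) (g (u σ t) * u2 σ t) t :=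
      (hGd _).comp t (hud2 σ t)
    have hGc' : HasDerivAt (fun x => H (σ, x)) (fderiv ℝ H (σ, t) (0, 1)) t :=
      ((hH.differentiable (by norm_num)) (σ, t)).hasFDerivAt.comp_hasDerivAt t (hline2 σ t)
    have heq : g (u σ t) * u2 σ t = fderiv ℝ H (σ, t) (0, 1) := hGc.unique hGc'
    rw [← heq, hgdef]
    have h2 := key2 σ t
    have hD := hden σ t
    have hFn := hF' σ t
    rw [div_eq_iff (mul_ne_zero hFn hD)]
    linear_combination (-(A (u σ t) * deriv C (u σ t) * Real.cos (C (u σ t)))) * h2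
  have hfd : ContDiff ℝ 1 (fderiv ℝ H) := hH.fderiv_right le_rfl
  have hfdd : Differentiable ℝ (fderiv ℝ H) := hfd.differentiable (by norm_num)
  have hL : deriv (fun τ =>
      -((A (u s τ)) ^ 2 * deriv C (u s τ) * Real.cos (C (u s τ))) /
        (deriv A (u s τ) * s + deriv B (u s τ))) t
      = fderiv ℝ (fderiv ℝ H) (s, t) (0, 1) (1, 0) := by
    have hfun : (fun τ => -((A (u s τ)) ^ 2 * deriv C (u s τ) * Real.cos (C (u s τ))) /
        (deriv A (u s τ) * s + deriv B (u s τ)))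
        = fun τ => fderiv ℝ H (s, τ) (1, 0) := funext hκ
    rw [hfun]
    have h2 : HasDerivAt (fun τ => fderiv ℝ H (s, τ))
        (fderiv ℝ (fderiv ℝ H) (s, t) (0, 1)) t :=
      (hfdd (s, t)).hasFDerivAt.comp_hasDerivAt t (hline2 s t)
    have h3 := h2.clm_apply (hasDerivAt_const t ((1:ℝ), (0:ℝ)))
    simpa using h3.deriv
  have hR : deriv (fun σ =>
      A (u σ t) * deriv C (u σ t) * Real.cos (C (u σ t)) /
        (deriv F (A (u σ t) * σ + B (u σ t)) *
          (deriv A (u σ t) * σ + deriv B (u σ t)))) s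
      = fderiv ℝ (fderiv ℝ H) (s, t) (1, 0) (0, 1) := by
    have hfun : (fun σ => A (u σ t) * deriv C (u σ t) * Real.cos (C (u σ t)) /
        (deriv F (A (u σ t) * σ + B (u σ t)) *
          (deriv A (u σ t) * σ + deriv B (u σ t))))
        = fun σ => fderiv ℝ H (σ, t) (0, 1) := funext hω
    rw [hfun]
    have h2 : HasDerivAt (fun σ => fderiv ℝ H (σ, t))
        (fderiv ℝ (fderiv ℝ H) (s, t) (1, 0)) s :=
      (hfdd (s, t)).hasFDerivAt.comp_hasDerivAt s (hline1 s t)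
    have h3 := h2.clm_apply (hasDerivAt_const s ((0:ℝ), (1:ℝ)))
    simpa using h3.deriv
  rw [hL, hR]
  exact second_derivative_symmetric (f' := fderiv ℝ H)
    (fun y => ((hH.differentiable (by norm_num)) y).hasFDerivAt)
    ((hfdd (s, t)).hasFDerivAt) _ _
end

section
/- Let f(x,y) be defined implicitly by the parametrization f = A₁(u)x + B₁(u), y = A(u)x + B(u), where A, B, A₁, B₁ : ℝ → ℝ are smooth and A'₁(u) = P(u)·A'(u), B'₁(u) = P(u)·B'(u) for some smooth P, with A'(u)x + B'(u) ≠ 0. Then f satisfies the zero Gaussian curvature equation f_{xx}·f_{yy} - f_{xy}² = 0 on the parametrized domain. -/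
/-- If `f` is defined via the parametrization
`f = A₁(u)x + B₁(u)`, `y = A(u)x + B(u)` (with `u = u(x,y)` implicitly), where
`A'₁ = P·A'`, `B'₁ = P·B'` and `A'(u)x + B'(u) ≠ 0`, then `f` satisfies the
zero Gaussian curvature equation `f_{xx}f_{yy} - f_{xy}² = 0`. -/
theorem stmt_10 (A B A₁ B₁ P : ℝ → ℝ) (u : ℝ → ℝ → ℝ)
    (hA : ContDiff ℝ (⊤ : ℕ∞) A) (hB : ContDiff ℝ (⊤ : ℕ∞) B)
    (hA₁ : ContDiff ℝ (⊤ : ℕ∞) A₁) (hB₁ : ContDiff ℝ (⊤ : ℕ∞) B₁) (hP : ContDiff ℝ (⊤ : ℕ∞) P)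
    (hu : ContDiff ℝ (⊤ : ℕ∞) (fun p : ℝ × ℝ => u p.1 p.2))
    (hPA : ∀ w : ℝ, deriv A₁ w = P w * deriv A w)
    (hPB : ∀ w : ℝ, deriv B₁ w = P w * deriv B w)
    (himp : ∀ x y : ℝ, A (u x y) * x + B (u x y) = y)
    (hden : ∀ x y : ℝ, deriv A (u x y) * x + deriv B (u x y) ≠ 0)
    (f : ℝ → ℝ → ℝ)
    (hfdef : ∀ x y : ℝ, f x y = A₁ (u x y) * x + B₁ (u x y)) :
    ∀ x y : ℝ,
      deriv (fun x' => deriv (fun x'' => f x'' y) x') x *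
        deriv (fun y' => deriv (fun y'' => f x y'') y') y -
      (deriv (fun x' => deriv (fun y' => f x' y') y) x) ^ 2 = 0 := by
  have hU := hu.differentiable (by simp)
  set ux : ℝ → ℝ → ℝ := fun x y => deriv (fun t => u t y) x with hux
  set uy : ℝ → ℝ → ℝ := fun x y => deriv (fun t => u x t) y with huy
  have hdux : ∀ x y, HasDerivAt (fun t => u t y) (ux x y) x := by
    intro x y
    exact ((hU.comp (differentiable_id.prodMk (differentiable_const y))).differentiableAt).hasDerivAt
  have hduy : ∀ x y, HasDerivAt (fun t => u x t) (uy x y) y := by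
    intro x y
    exact ((hU.comp ((differentiable_const x).prodMk differentiable_id)).differentiableAt).hasDerivAt
  -- generic chain rules
  have chainx : ∀ (g : ℝ → ℝ), Differentiable ℝ g → ∀ x y,
      HasDerivAt (fun t => g (u t y)) (deriv g (u x y) * ux x y) x := by
    intro g hg x y
    exact ((hg (u x y)).hasDerivAt).comp x (hdux x y)
  have chainy : ∀ (g : ℝ → ℝ), Differentiable ℝ g → ∀ x y,
      HasDerivAt (fun t => g (u x t)) (deriv g (u x y) * uy x y) y := by
    intro g hg x y
    exact ((hg (u x y)).hasDerivAt).comp y (hduy x y)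
  have hA' := hA.differentiable (by simp)
  have hB' := hB.differentiable (by simp)
  have hA₁' := hA₁.differentiable (by simp)
  have hB₁' := hB₁.differentiable (by simp)
  have hP' := hP.differentiable (by simp)
  -- implicit relation differentiated in x
  have h1 : ∀ x y, deriv A (u x y) * ux x y * x + A (u x y) * 1
      + deriv B (u x y) * ux x y = 0 := by
    intro x y
    have hd : HasDerivAt (fun t => A (u t y) * t + B (u t y))
        (deriv A (u x y) * ux x y * x + A (u x y) * 1 + deriv B (u x y) * ux x y) x :=
      ((chainx A hA' x y).mul (hasDerivAt_id x)).add (chainx B hB' x y)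
    have heq : (fun t => A (u t y) * t + B (u t y)) = fun _ => y :=
      funext fun t => himp t y
    rw [heq] at hd
    exact hd.unique (hasDerivAt_const x y)
  -- implicit relation differentiated in y
  have h2 : ∀ x y, deriv A (u x y) * uy x y * x + deriv B (u x y) * uy x y = 1 := by
    intro x y
    have hd : HasDerivAt (fun t => A (u x t) * x + B (u x t))
        (deriv A (u x y) * uy x y * x + deriv B (u x y) * uy x y) y :=
      ((chainy A hA' x y).mul_const x).add (chainy B hB' x y)
    have heq : (fun t => A (u x t) * x + B (u x t)) = fun t => t :=
      funext fun t => himp x t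
    rw [heq] at hd
    exact hd.unique (hasDerivAt_id y)
  -- first derivative in x
  have hfx : ∀ x y, deriv (fun t => f t y) x = A₁ (u x y) - P (u x y) * A (u x y) := by
    intro x y
    have heq : (fun t => f t y) = fun t => A₁ (u t y) * t + B₁ (u t y) :=
      funext fun t => hfdef t y
    have hd : HasDerivAt (fun t => f t y)
        (deriv A₁ (u x y) * ux x y * x + A₁ (u x y) * 1 + deriv B₁ (u x y) * ux x y) x := by
      rw [heq]
      exact ((chainx A₁ hA₁' x y).mul (hasDerivAt_id x)).add (chainx B₁ hB₁' x y)
    rw [hd.deriv, hPA, hPB]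
    linear_combination P (u x y) * h1 x y
  -- first derivative in y
  have hfy : ∀ x y, deriv (fun t => f x t) y = P (u x y) := by
    intro x y
    have heq : (fun t => f x t) = fun t => A₁ (u x t) * x + B₁ (u x t) :=
      funext fun t => hfdef x t
    have hd : HasDerivAt (fun t => f x t)
        (deriv A₁ (u x y) * uy x y * x + deriv B₁ (u x y) * uy x y) y := by
      rw [heq]
      exact ((chainy A₁ hA₁' x y).mul_const x).add (chainy B₁ hB₁' x y)
    rw [hd.deriv, hPA, hPB]
    linear_combination P (u x y) * h2 x y
  intro x y
  -- f_xx
  have hfxx : deriv (fun x' => deriv (fun x'' => f x'' y) x') x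
      = deriv A₁ (u x y) * ux x y
        - (deriv P (u x y) * ux x y * A (u x y) + P (u x y) * (deriv A (u x y) * ux x y)) := by
    have heq : (fun x' => deriv (fun x'' => f x'' y) x')
        = fun x' => A₁ (u x' y) - P (u x' y) * A (u x' y) :=
      funext fun x' => hfx x' y
    rw [heq]
    exact (((chainx A₁ hA₁' x y).sub ((chainx P hP' x y).mul (chainx A hA' x y)))).deriv
  -- f_yy
  have hfyy : deriv (fun y' => deriv (fun y'' => f x y'') y') y
      = deriv P (u x y) * uy x y := by
    have heq : (fun y' => deriv (fun y'' => f x y'') y') = fun y' => P (u x y') :=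
      funext fun y' => hfy x y'
    rw [heq]
    exact (chainy P hP' x y).deriv
  -- f_xy
  have hfxy : deriv (fun x' => deriv (fun y' => f x' y') y) x
      = deriv P (u x y) * ux x y := by
    have heq : (fun x' => deriv (fun y' => f x' y') y) = fun x' => P (u x' y) :=
      funext fun x' => hfy x' y
    rw [heq]
    exact (chainx P hP' x y).deriv
  -- u_x = -A(u) u_y
  have hrel : ux x y = -A (u x y) * uy x y := by
    have h3 : (deriv A (u x y) * x + deriv B (u x y))
        * (ux x y + A (u x y) * uy x y) = 0 := by
      linear_combination h1 x y + A (u x y) * h2 x y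
    rcases mul_eq_zero.mp h3 with h | h
    · exact absurd h (hden x y)
    · linarith
  rw [hfxx, hfyy, hfxy, hPA, hrel]
  ring
end
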